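/- Let a, b, c, d be positive real numbers with ε₁a + ε₂b + ε₃c + ε₄d ≠ 0 for every choice of signs εᵢ ∈ {+1, −1}, and such that each of a, b, c, d is less than the sum of the other three. For a nonzero complex number w, there exists a configuration V of Q(a,b,c,d) with R(V) = w if and only if |w| = ac/(bd) and 4a²b² + 4c²d² − (a²+b²−c²−d²)² − 8abcd·(Re w)/|w| ≥ 0. -/

import Mathlib

/-
Write the edges as `z₁ = v₂ - v₁, …, z₄ = v₁ - v₄`, so that `R = z₁ z₃ / (z₂ z₄)`, and put
`p = z₁ z̄₂`, `q = z₃ z̄₄`. Then `|p| = ab`, `|q| = cd`, `pq = R (bd)²`, and computing the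
squared diagonal `|z₁ + z₂|² = |z₃ + z₄|²` in two ways gives `Re p - Re q = K` with
`K = (c² + d² - a² - b²)/2`; conversely any such `p, q` come from a configuration, rotating the
second half of the quadrilateral so that it closes up. Writing `p = ab u` with `|u| = 1` forces
`q = cd v ū` for `v = w/|w|`, and the last condition becomes `Re((ab - cd v̄) u) = K`, which is
solvable in `u` exactly when `K² ≤ |ab - cd v̄|² = a²b² + c²d² - 2abcd Re v`, i.e. `F ≥ 0`.
-/

/-- The uniformizer `R(V) = [v₁,v₃;v₂,v₄]` of a planar quadrilateral. -/
noncomputable def uniformizer (v₁ v₂ v₃ v₄ : ℂ) : ℂ :=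
  ((v₂ - v₁) / (v₂ - v₃)) * ((v₄ - v₃) / (v₄ - v₁))

/-- A planar configuration of the quadrilateral linkage `Q(a,b,c,d)`. -/
def IsConfig (a b c d : ℝ) (v₁ v₂ v₃ v₄ : ℂ) : Prop :=
  ‖v₂ - v₁‖ = a ∧ ‖v₃ - v₂‖ = b ∧
  ‖v₄ - v₃‖ = c ∧ ‖v₁ - v₄‖ = d

/-- Non-degeneracy of the linkage `Q(a,b,c,d)`. -/
def NonDeg (a b c d : ℝ) : Prop :=
  ∀ ε₁ ε₂ ε₃ ε₄ : ℝ, (ε₁ = 1 ∨ ε₁ = -1) → (ε₂ = 1 ∨ ε₂ = -1) →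
    (ε₃ = 1 ∨ ε₃ = -1) → (ε₄ = 1 ∨ ε₄ = -1) →
    ε₁ * a + ε₂ * b + ε₃ * c + ε₄ * d ≠ 0

/-- Each side-length is less than the sum of the other three. -/
def StrictQuad (a b c d : ℝ) : Prop :=
  a < b + c + d ∧ b < a + c + d ∧ c < a + b + d ∧ d < a + b + c

open ComplexConjugate

namespace Complex

theorem exists_norm_eq_one_re_mul_eq_iff (Z : ℂ) (K : ℝ) :
    (∃ u : ℂ, ‖u‖ = 1 ∧ (Z * u).re = K) ↔ K ^ 2 ≤ ‖Z‖ ^ 2 := by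
  constructor
  · rintro ⟨u, hu, rfl⟩
    have := abs_re_le_norm (Z * u)
    rw [norm_mul, hu, mul_one] at this
    exact sq_le_sq' (abs_le.mp this).1 (abs_le.mp this).2
  · intro hK
    rcases eq_or_ne Z 0 with rfl | hZ
    · refine ⟨1, by simp, ?_⟩
      have : K = 0 := by simpa using hK
      simp [this]
    set t := √(‖Z‖ ^ 2 - K ^ 2)
    have ht : K ^ 2 + t ^ 2 = ‖Z‖ ^ 2 := by
      rw [Real.sq_sqrt (sub_nonneg.mpr hK)]; ring
    refine ⟨(K + t * I) / Z, ?_, ?_⟩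
    · rw [norm_div, norm_add_mul_I, ht, Real.sqrt_sq (norm_nonneg Z),
        div_self (norm_ne_zero_iff.mpr hZ)]
    · rw [mul_div_cancel₀ _ hZ]; simp

theorem exists_norm_eq_one_mul_eq {x y : ℂ} (h : ‖x‖ = ‖y‖) :
    ∃ σ : ℂ, ‖σ‖ = 1 ∧ σ * y = x := by
  rcases eq_or_ne y 0 with rfl | hy
  · exact ⟨1, by simp, by simpa [eq_comm] using h⟩
  · exact ⟨x / y, by rw [norm_div, h, div_self (norm_ne_zero_iff.mpr hy)],
      div_mul_cancel₀ x hy⟩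

theorem re_mul_sub_re_mul_conj (α β u : ℂ) :
    (α * u).re - (β * conj u).re = ((α - conj β) * u).re := by
  simp only [mul_re, sub_re, sub_im, conj_re, conj_im]; ring

theorem sq_norm_ofReal_sub_conj {v : ℂ} (hv : ‖v‖ = 1) (r s : ℝ) :
    ‖(r : ℂ) - conj (s * v)‖ ^ 2 = r ^ 2 + s ^ 2 - 2 * r * s * v.re := by
  have hv2 : normSq v = 1 := by rw [← Complex.sq_norm, hv, one_pow]
  rw [Complex.sq_norm, normSq_sub, conj_conj, normSq_conj, normSq_mul, hv2, normSq_ofReal,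
    normSq_ofReal, re_ofReal_mul, re_ofReal_mul]
  ring

theorem mul_conj_of_norm_eq_one {u : ℂ} (hu : ‖u‖ = 1) : u * conj u = 1 := by
  rw [← inv_eq_conj hu, mul_inv_cancel₀ (norm_ne_zero_iff.mp (by rw [hu]; exact one_ne_zero))]

theorem exists_norm_eq_mul_eq_re_sub_eq_iff {r s : ℝ} (hr : 0 < r) (hs : 0 ≤ s) {ζ : ℂ} (hζ : ζ ≠ 0)
    (K : ℝ) :
    (∃ p q : ℂ, ‖p‖ = r ∧ ‖q‖ = s ∧ p * q = ζ ∧ p.re - q.re = K) ↔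
      ‖ζ‖ = r * s ∧ K ^ 2 ≤ r ^ 2 + s ^ 2 - 2 * r * s * (ζ.re / ‖ζ‖) := by
  have hζ₀ : (‖ζ‖ : ℂ) ≠ 0 := ofReal_ne_zero.mpr (norm_ne_zero_iff.mpr hζ)
  have hv : ‖ζ / ‖ζ‖‖ = 1 := by simp [norm_ne_zero_iff.mpr hζ]
  have hζv : ζ = ‖ζ‖ * (ζ / ‖ζ‖) := (mul_div_cancel₀ ζ hζ₀).symm
  rw [← div_ofReal_re, ← sq_norm_ofReal_sub_conj hv, ← exists_norm_eq_one_re_mul_eq_iff]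
  generalize ζ / ‖ζ‖ = v at hv hζv ⊢
  constructor
  · rintro ⟨p, q, hp, hq, hpq, hK⟩
    have hζn : ‖ζ‖ = r * s := by rw [← hpq, norm_mul, hp, hq]
    have hp₀ : p ≠ 0 := norm_ne_zero_iff.mp (by rw [hp]; exact hr.ne')
    have hq' : q = s * v * conj (p / r) := by
      refine mul_left_cancel₀ hp₀ ?_
      have hpp : p * conj p = (r : ℂ) ^ 2 := by
        rw [mul_conj, ← Complex.sq_norm, hp]; push_cast; rfl
      have hr₀ : (r : ℂ) ≠ 0 := ofReal_ne_zero.mpr hr.ne'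
      rw [hpq, hζv, hζn, map_div₀, conj_ofReal]
      field_simp
      push_cast
      linear_combination (-(s : ℂ) * v) * hpp
    refine ⟨hζn, p / r, by simp [hp, abs_of_pos hr, hr.ne'], ?_⟩
    rw [← re_mul_sub_re_mul_conj, ← hq', mul_div_cancel₀ _ (ofReal_ne_zero.mpr hr.ne')]
    exact hK
  · rintro ⟨hζn, u, hu, hK⟩
    refine ⟨r * u, s * v * conj u, by simp [hu, abs_of_pos hr],
      by simp [hu, hv, abs_of_nonneg hs], ?_, by rw [re_mul_sub_re_mul_conj]; exact hK⟩
    rw [hζv, hζn]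
    push_cast
    linear_combination (r * s * v : ℂ) * mul_conj_of_norm_eq_one hu

theorem sq_norm_add_eq (z w : ℂ) : ‖z + w‖ ^ 2 = ‖z‖ ^ 2 + ‖w‖ ^ 2 + 2 * (z * conj w).re := by
  simp only [Complex.sq_norm, normSq_add]

theorem sq_norm_div_ofReal_add {b : ℝ} (hb : b ≠ 0) (p : ℂ) :
    ‖p / b + b‖ ^ 2 = (‖p‖ / b) ^ 2 + b ^ 2 + 2 * p.re := by
  rw [sq_norm_add_eq, conj_ofReal, div_mul_cancel₀ p (ofReal_ne_zero.mpr hb), norm_div,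
    norm_real, Real.norm_eq_abs]
  simp only [div_pow, sq_abs]

end Complex

open Complex

theorem uniformizer_eq (v₁ v₂ v₃ v₄ : ℂ) :
    uniformizer v₁ v₂ v₃ v₄ = (v₂ - v₁) * (v₄ - v₃) / ((v₃ - v₂) * (v₁ - v₄)) := by
  rw [uniformizer, div_mul_div_comm]
  congr 1
  ring

theorem exists_isConfig_uniformizer_eq_iff {a b c d : ℝ} (hb : 0 < b) (hd : 0 < d) (w : ℂ) :
    (∃ v₁ v₂ v₃ v₄ : ℂ, IsConfig a b c d v₁ v₂ v₃ v₄ ∧ uniformizer v₁ v₂ v₃ v₄ = w) ↔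
      ∃ p q : ℂ, ‖p‖ = a * b ∧ ‖q‖ = c * d ∧ p * q = w * ((b * d) ^ 2 : ℝ) ∧
        p.re - q.re = (c ^ 2 + d ^ 2 - a ^ 2 - b ^ 2) / 2 := by
  constructor
  · rintro ⟨v₁, v₂, v₃, v₄, ⟨h₁, h₂, h₃, h₄⟩, rfl⟩
    have hz₂ : v₃ - v₂ ≠ 0 := norm_ne_zero_iff.mp (by rw [h₂]; exact hb.ne')
    have hz₄ : v₁ - v₄ ≠ 0 := norm_ne_zero_iff.mp (by rw [h₄]; exact hd.ne')
    refine ⟨(v₂ - v₁) * conj (v₃ - v₂), (v₄ - v₃) * conj (v₁ - v₄),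
      by rw [norm_mul, norm_conj, h₁, h₂], by rw [norm_mul, norm_conj, h₃, h₄], ?_, ?_⟩
    · have hbd : (((b * d) ^ 2 : ℝ) : ℂ) =
          (v₃ - v₂) * conj (v₃ - v₂) * ((v₁ - v₄) * conj (v₁ - v₄)) := by
        simp only [mul_conj, ← Complex.sq_norm, h₂, h₄]; push_cast; ring
      rw [uniformizer_eq, hbd]
      field_simp
    · have hdiag := congrArg (‖·‖ ^ 2)
        (show (v₂ - v₁) + (v₃ - v₂) = -((v₄ - v₃) + (v₁ - v₄)) by ring)
      simp only [norm_neg, sq_norm_add_eq, h₁, h₂, h₃, h₄] at hdiag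
      linarith
  · rintro ⟨p, q, hp, hq, hpq, hK⟩
    have hdiag : ‖-(p / b + b)‖ = ‖q / d + d‖ := by
      rw [norm_neg]
      refine (pow_left_inj₀ (norm_nonneg _) (norm_nonneg _) two_ne_zero).mp ?_
      rw [sq_norm_div_ofReal_add hb.ne', sq_norm_div_ofReal_add hd.ne', hp, hq,
        mul_div_cancel_right₀ a hb.ne', mul_div_cancel_right₀ c hd.ne']
      linarith
    -- `σ` rotates the triangle `v₃ v₄ v₁` about `v₃` so that the quadrilateral closes up
    obtain ⟨σ, hσ, hσd⟩ := exists_norm_eq_one_mul_eq hdiag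
    have hσ₀ : σ ≠ 0 := norm_ne_zero_iff.mp (by rw [hσ]; exact one_ne_zero)
    refine ⟨0, p / b, p / b + b, p / b + b + σ * (q / d), ⟨?_, ?_, ?_, ?_⟩, ?_⟩
    · simp [hp, abs_of_pos hb, hb.ne']
    · simp [abs_of_pos hb]
    · simp [hσ, hq, abs_of_pos hd, hd.ne']
    · rw [show 0 - (p / b + b + σ * (q / d)) = σ * d by linear_combination -hσd]
      simp [hσ, abs_of_pos hd]
    · rw [uniformizer_eq, sub_zero, add_sub_cancel_left, add_sub_cancel_left,
        show 0 - (p / b + b + σ * (q / d)) = σ * d by linear_combination -hσd]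
      have hb' : (b : ℂ) ≠ 0 := ofReal_ne_zero.mpr hb.ne'
      have hd' : (d : ℂ) ≠ 0 := ofReal_ne_zero.mpr hd.ne'
      push_cast at hpq
      field_simp
      linear_combination hpq

theorem stmt_5_general (a b c d : ℝ) (ha : 0 < a) (hb : 0 < b) (hc : 0 < c) (hd : 0 < d)
    (w : ℂ) (hw : w ≠ 0) :
    (∃ v₁ v₂ v₃ v₄ : ℂ, IsConfig a b c d v₁ v₂ v₃ v₄ ∧
        uniformizer v₁ v₂ v₃ v₄ = w) ↔
      (‖w‖ = a * c / (b * d) ∧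
        4 * a ^ 2 * b ^ 2 + 4 * c ^ 2 * d ^ 2 - (a ^ 2 + b ^ 2 - c ^ 2 - d ^ 2) ^ 2
          - 8 * a * b * c * d * (w.re / ‖w‖) ≥ 0) := by
  have hbd : 0 < b * d := by positivity
  have hbd2 : 0 < (b * d) ^ 2 := by positivity
  rw [exists_isConfig_uniformizer_eq_iff hb hd,
    exists_norm_eq_mul_eq_re_sub_eq_iff (by positivity) (by positivity)
      (mul_ne_zero hw (ofReal_ne_zero.mpr hbd2.ne')),
    norm_mul, norm_real, Real.norm_eq_abs, abs_of_pos hbd2, re_mul_ofReal,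
    mul_div_mul_right _ _ hbd2.ne']
  refine and_congr ?_ ⟨fun h => by linarith, fun h => by linarith⟩
  rw [eq_div_iff hbd.ne', show a * b * (c * d) = a * c * (b * d) by ring, sq,
    ← mul_assoc, mul_left_inj' hbd.ne']

theorem stmt_5 (a b c d : ℝ) (ha : 0 < a) (hb : 0 < b) (hc : 0 < c) (hd : 0 < d)
    (hnd : NonDeg a b c d) (hq : StrictQuad a b c d) (w : ℂ) (hw : w ≠ 0) :
    (∃ v₁ v₂ v₃ v₄ : ℂ, IsConfig a b c d v₁ v₂ v₃ v₄ ∧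
        uniformizer v₁ v₂ v₃ v₄ = w) ↔
      (‖w‖ = a * c / (b * d) ∧
        4 * a ^ 2 * b ^ 2 + 4 * c ^ 2 * d ^ 2 - (a ^ 2 + b ^ 2 - c ^ 2 - d ^ 2) ^ 2
          - 8 * a * b * c * d * (w.re / ‖w‖) ≥ 0) :=
  stmt_5_general a b c d ha hb hc hd w hw
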